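/- Let k, ℓ, r be integers with 1 ≤ r ≤ ℓ, 3 ≤ ℓ, and ℓ ≤ k/3. Let q = ⌈k/ℓ⌉, let π be a uniformly random permutation of {1,…,k}, and let R = min{π(1),…,π(q)}. Then Pr(R > r) > e^{−4r/ℓ}. -/

import Mathlib

/-!
The event `R > r` says that `π` maps the first `q` positions into `{r+1, …, k}`. The symmetric
group acts transitively on injections `Fin q ↪ Fin k`, and all fibres of an orbit map are cosets
of one stabiliser, so the restriction of a uniform `π` to the first `q` positions is a uniform
injection and `Pr(R > r) = (k-r)_q / (k)_q = ∏_{m<q} (k-r-m)/(k-m)`.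
Since `3m ≤ k` for `m < q`, each factor is at least `1 - x` with `x = 3r/(2k) ≤ 1/2`, and
`1 - x > e^{-2x}`; hence `Pr(R > r) > e^{-3rq/k} ≥ e^{-4r/ℓ}`, because `qℓ < k + ℓ ≤ 4k/3`.
-/

open scoped Classical

/-- For a permutation `π` of `{1,…,k}` (modelled as `Equiv.Perm (Fin k)` with values
`(π j).val + 1 ∈ {1,…,k}`), `minOfFirst k q π` is `R = min {π(1),…,π(q)}`. -/
noncomputable def minOfFirst (k q : ℕ) (π : Equiv.Perm (Fin k)) : ℕ :=
  sInf {v : ℕ | ∃ j : Fin k, (j : ℕ) < q ∧ v = (π j : ℕ) + 1}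

open Finset

namespace MulAction

variable {G X : Type*} [Group G] [Fintype G] [MulAction G X]

theorem card_filter_smul_eq {x y : X} (hy : y ∈ orbit G x) :
    #{g : G | g • x = y} = Fintype.card (stabilizer G x) := by
  obtain ⟨h, rfl⟩ := hy
  rw [← card_univ, ← card_map (Function.Embedding.subtype _)]
  refine card_nbij' (h⁻¹ * ·) (h * ·) ?_ ?_ ?_ ?_ <;> intro g hg <;> simp_all [mul_smul]

theorem card_filter_smul_mem [IsPretransitive G X] (x : X) (B : Finset X) :
    #{g : G | g • x ∈ B} = #B * Fintype.card (stabilizer G x) := by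
  rw [card_eq_sum_card_fiberwise (s := {g : G | g • x ∈ B}) (t := B) (f := (· • x))
    (fun g hg => (mem_filter.1 hg).2), ← smul_eq_mul, ← sum_const]
  refine sum_congr rfl fun y hy => ?_
  rw [filter_filter, ← card_filter_smul_eq (mem_orbit_iff.2 (exists_smul_eq G x y))]
  congr 1
  ext g
  simp only [mem_filter, mem_univ, true_and, and_iff_right_iff_imp]
  exact fun h => h ▸ hy

theorem card_filter_smul_mem_mul_card [Fintype X] [IsPretransitive G X] (x : X) (B : Finset X) :
    #{g : G | g • x ∈ B} * Fintype.card X = #B * Fintype.card G := by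
  have hG := card_filter_smul_mem (G := G) x univ
  simp only [mem_univ, filter_true, card_univ] at hG
  rw [card_filter_smul_mem, hG]
  ring

end MulAction

theorem Fintype.card_embedding_forall {α β : Type*} [Fintype α] [Fintype β] (p : β → Prop)
    [DecidablePred p] :
    #{f : α ↪ β | ∀ a, p (f a)} = (Fintype.card {b // p b}).descFactorial (Fintype.card α) := by
  rw [← Fintype.card_subtype, ← Fintype.card_embedding_eq]
  exact Fintype.card_congr
    { toFun := fun f =>
        ⟨fun a => ⟨f.1 a, f.2 a⟩, fun a b h => f.1.injective (congrArg Subtype.val h)⟩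
      invFun := fun g => ⟨g.trans (Function.Embedding.subtype p), fun a => (g a).2⟩
      left_inv := fun f => rfl
      right_inv := fun g => rfl }

theorem Fin.card_filter_le_val (n r : ℕ) : #{i : Fin n | r ≤ (i : ℕ)} = n - r := by
  have h := card_filter_add_card_filter_not (s := (univ : Finset (Fin n))) (fun i => (i : ℕ) < r)
  simp only [not_lt, card_univ, Fintype.card_fin, Fin.card_filter_val_lt] at h
  omega

theorem Equiv.Perm.card_filter_le_apply_castLE_mul_descFactorial {k q : ℕ} (hqk : q ≤ k)
    (r : ℕ) :
    #{π : Equiv.Perm (Fin k) | ∀ j : Fin q, r ≤ (π (Fin.castLE hqk j) : ℕ)} * k.descFactorial q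
      = (k - r).descFactorial q * k.factorial := by
  have := Equiv.Perm.isMultiplyPretransitive (Fin k) q
  have hB : #{f : Fin q ↪ Fin k | ∀ j, r ≤ (f j : ℕ)} = (k - r).descFactorial q := by
    convert Fintype.card_embedding_forall (α := Fin q) (fun b : Fin k => r ≤ (b : ℕ)) using 1
    · congr -- the two filters differ only in their decidability instances
    · rw [Fintype.card_subtype, Fin.card_filter_le_val, Fintype.card_fin]
  have h := MulAction.card_filter_smul_mem_mul_card (G := Equiv.Perm (Fin k))
    (Fin.castLEEmb hqk) {f | ∀ j, r ≤ (f j : ℕ)}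
  rw [hB, Fintype.card_embedding_eq, Fintype.card_perm, Fintype.card_fin, Fintype.card_fin] at h
  simpa [Function.Embedding.smul_apply] using h

theorem Real.exp_neg_two_mul_lt_one_sub {x : ℝ} (hx : 0 < x) (hx' : x ≤ 1 / 2) :
    Real.exp (-(2 * x)) < 1 - x := by
  have hpos : 0 < 1 + 2 * x := by linarith
  calc Real.exp (-(2 * x)) = (Real.exp (2 * x))⁻¹ := Real.exp_neg _
    _ < (1 + 2 * x)⁻¹ :=
        inv_strictAnti₀ hpos (by linarith [Real.add_one_lt_exp (by positivity : 2 * x ≠ 0)])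
    _ ≤ 1 - x := by rw [inv_le_iff_one_le_mul₀ hpos]; nlinarith

theorem pow_mul_descFactorial_le {k q r : ℕ} (hrk : 3 * r ≤ k) (hqk : 3 * (q - 1) ≤ k) :
    (1 - 3 * r / (2 * k) : ℝ) ^ q * k.descFactorial q ≤ (k - r).descFactorial q := by
  rcases Nat.eq_zero_or_pos k with rfl | hk
  · obtain rfl : r = 0 := by omega
    simp
  rw [Nat.descFactorial_eq_prod_range, Nat.descFactorial_eq_prod_range, Nat.cast_prod,
    Nat.cast_prod]
  nth_rw 1 [← card_range q]
  rw [pow_card_mul_prod]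
  refine prod_le_prod (fun i _ => ?_) (fun i hi => ?_)
  · have : (3 * r / (2 * k) : ℝ) ≤ 1 := by
      rw [div_le_one (by positivity)]; exact_mod_cast (by omega : 3 * r ≤ 2 * k)
    have : (0 : ℝ) ≤ (k - i : ℕ) := Nat.cast_nonneg _
    nlinarith
  · have hi : 3 * i ≤ k := by have := mem_range.1 hi; omega
    have hrx : (r : ℝ) ≤ 3 * r / (2 * k) * (k - i) := by
      rw [div_mul_eq_mul_div, le_div_iff₀ (by positivity)]
      have : (3 * i : ℝ) ≤ k := by exact_mod_cast hi
      nlinarith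
    rw [Nat.cast_sub (by omega), Nat.cast_sub (by omega), Nat.cast_sub (by omega)]
    linarith

theorem exp_neg_lt_descFactorial_div {k q r : ℕ} (hr : 0 < r) (hq : 0 < q) (hrk : 3 * r ≤ k)
    (hqk : 3 * (q - 1) ≤ k) :
    Real.exp (-(3 * r * q / k)) < (k - r).descFactorial q / k.descFactorial q := by
  have hk : (0 : ℝ) < k := by exact_mod_cast (by omega : 0 < k)
  set x : ℝ := 3 * r / (2 * k)
  have hx : 0 < x := by positivity
  have hx' : x ≤ 1 / 2 := by
    rw [div_le_iff₀ (by positivity)]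
    have : (3 * r : ℝ) ≤ k := by exact_mod_cast hrk
    linarith
  have hdesc : (0 : ℝ) < k.descFactorial q := by
    exact_mod_cast Nat.descFactorial_pos.2 (by omega)
  calc Real.exp (-(3 * r * q / k)) = Real.exp (-(2 * x)) ^ q := by
        rw [← Real.exp_nat_mul]; congr 1; simp only [x]; field_simp
    _ < (1 - x) ^ q := pow_lt_pow_left₀ (Real.exp_neg_two_mul_lt_one_sub hx hx')
        (Real.exp_pos _).le hq.ne'
    _ ≤ (k - r).descFactorial q / k.descFactorial q := by
        rw [le_div_iff₀ hdesc]; exact pow_mul_descFactorial_le hrk hqk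

section CeilDiv

variable {α : Type*} [Field α] [LinearOrder α] [IsStrictOrderedRing α] [FloorSemiring α]
  {k ℓ : ℕ}

theorem Nat.le_ceil_div_mul (hℓ : 0 < ℓ) : k ≤ ⌈(k : α) / ℓ⌉₊ * ℓ := by
  have hℓ' : (0 : α) < ℓ := by exact_mod_cast hℓ
  exact_mod_cast (div_le_iff₀ hℓ').1 (Nat.le_ceil ((k : α) / ℓ))

theorem Nat.ceil_div_mul_lt_add (hℓ : 0 < ℓ) : ⌈(k : α) / ℓ⌉₊ * ℓ < k + ℓ := by
  have hℓ' : (0 : α) < ℓ := by exact_mod_cast hℓ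
  have := Nat.ceil_lt_add_one (div_nonneg k.cast_nonneg hℓ'.le)
  rw [div_add_one hℓ'.ne', lt_div_iff₀ hℓ'] at this
  exact_mod_cast this

end CeilDiv

theorem lt_minOfFirst_iff {k q r : ℕ} (hq : 0 < q) (hqk : q ≤ k) (π : Equiv.Perm (Fin k)) :
    r < minOfFirst k q π ↔ ∀ j : Fin q, r ≤ (π (Fin.castLE hqk j) : ℕ) := by
  set S := {v : ℕ | ∃ j : Fin k, (j : ℕ) < q ∧ v = (π j : ℕ) + 1}
  constructor
  · intro h j
    have : minOfFirst k q π ≤ π (Fin.castLE hqk j) + 1 :=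
      Nat.sInf_le (s := S) ⟨Fin.castLE hqk j, j.isLt, rfl⟩
    omega
  · intro h
    obtain ⟨j, hj, hv⟩ := Nat.sInf_mem (s := S) ⟨_, ⟨⟨0, hq.trans_le hqk⟩, hq, rfl⟩⟩
    change r < sInf S
    rw [hv]
    exact Nat.lt_succ_of_le (h ⟨j, hj⟩)

/-- For integers `1 ≤ r ≤ ℓ`, `3 ≤ ℓ`, `ℓ ≤ k/3`, `q = ⌈k/ℓ⌉`, a uniformly random
permutation `π` of `{1,…,k}` and `R = min{π(1),…,π(q)}`,
we have `Pr(R > r) > e^(−4r/ℓ)`. -/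
theorem prob_min_gt_gt_exp (k ℓ r : ℕ) (hr : 1 ≤ r) (hrl : r ≤ ℓ) (hl : 3 ≤ ℓ)
    (hlk : (ℓ : ℝ) ≤ (k : ℝ) / 3) :
    Real.exp (-(4 * r : ℝ) / (ℓ : ℝ)) <
      (((Finset.univ : Finset (Equiv.Perm (Fin k))).filter (fun π =>
          r < minOfFirst k ⌈(k : ℝ) / (ℓ : ℝ)⌉₊ π)).card : ℝ) / (Nat.factorial k : ℝ) := by
  set q := ⌈(k : ℝ) / (ℓ : ℝ)⌉₊
  have hkℓ : 3 * ℓ ≤ k := by exact_mod_cast (by linarith : (3 * ℓ : ℝ) ≤ k)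
  have hq_lo : k ≤ q * ℓ := Nat.le_ceil_div_mul (by omega)
  have hq_hi : q * ℓ < k + ℓ := Nat.ceil_div_mul_lt_add (by omega)
  have hq : 0 < q := Nat.pos_of_ne_zero fun h => by simp [h] at hq_lo; omega
  have hqk : 3 * (q - 1) ≤ k := by
    have : 3 * (q - 1) ≤ (q - 1) * ℓ := by rw [mul_comm]; exact Nat.mul_le_mul_left _ hl
    rw [Nat.sub_one_mul] at this
    omega
  have hqk' : q ≤ k := by omega
  have hexp : -(4 * r : ℝ) / ℓ ≤ -(3 * r * q / k) := by
    have hk : (0 : ℝ) < k := by exact_mod_cast (by omega : 0 < k)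
    have : (3 * q * ℓ : ℝ) ≤ 4 * k := by exact_mod_cast (by linarith : 3 * q * ℓ ≤ 4 * k)
    rw [neg_div, neg_le_neg_iff, div_le_div_iff₀ hk (by positivity)]
    nlinarith
  have hdesc : (0 : ℝ) < k.descFactorial q := by exact_mod_cast Nat.descFactorial_pos.2 hqk'
  calc Real.exp (-(4 * r : ℝ) / ℓ) ≤ Real.exp (-(3 * r * q / k)) := Real.exp_le_exp.2 hexp
    _ < (k - r).descFactorial q / k.descFactorial q :=
        exp_neg_lt_descFactorial_div hr hq (by omega) hqk
    _ = _ := by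
        rw [filter_congr fun π _ => lt_minOfFirst_iff hq hqk' π,
          div_eq_div_iff hdesc.ne' (by positivity)]
        exact_mod_cast (Equiv.Perm.card_filter_le_apply_castLE_mul_descFactorial hqk' r).symm
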